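/- Let ρ be a symmetric Lévy measure on ℝ^d∖{0} with full support and Θ(u) = ∫(1 − cos⟨u,r⟩) ρ(dr) the associated real-valued continuous negative definite function. Let U, V be d-dimensional random variables with E[Θ(U)] + E[Θ(V)] < ∞, and let (U′,V′) be an independent copy of (U,V). Then d_ρ²(law(U), law(V)) = 2 E[Θ(U − V′)] − E[Θ(U − U′)] − E[Θ(V − V′)], and all terms in this identity are finite. -/

import Mathlib

open MeasureTheory ProbabilityTheory
open scoped ENNReal RealInnerProductSpace

/-- `ρ` is a Lévy measure on `ℝ^d ∖ {0}`: it does not charge the origin and integrates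
`1 ∧ |r|²`. -/
def IsLevyMeasure {d : ℕ} (ρ : Measure (EuclideanSpace ℝ (Fin d))) : Prop :=
  ρ {0} = 0 ∧ ∫⁻ r, ENNReal.ofReal (min 1 (‖r‖ ^ 2)) ∂ρ < ∞

/-- `ρ` is symmetric: `ρ(B) = ρ(-B)` for all Borel sets `B`. -/
def IsSymmetricMeasure {d : ℕ} (ρ : Measure (EuclideanSpace ℝ (Fin d))) : Prop :=
  ρ.map (fun r => -r) = ρ

/-- `ρ` has full (topological) support on `ℝ^d ∖ {0}`. -/
def HasFullSupportOffZero {d : ℕ} (ρ : Measure (EuclideanSpace ℝ (Fin d))) : Prop :=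
  ∀ G : Set (EuclideanSpace ℝ (Fin d)), IsOpen G → G.Nonempty →
    (0 : EuclideanSpace ℝ (Fin d)) ∉ G → 0 < ρ G

/-- The real-valued continuous negative definite function
`Θ(u) = ∫ (1 - cos ⟪u, r⟫) ρ(dr)` associated to `ρ`, with values in `[0,∞]`. -/
noncomputable def levyCndf {d : ℕ} (ρ : Measure (EuclideanSpace ℝ (Fin d)))
    (u : EuclideanSpace ℝ (Fin d)) : ℝ≥0∞ :=
  ∫⁻ r, ENNReal.ofReal (1 - Real.cos ⟪u, r⟫) ∂ρ

/-- The characteristic function `f_U(r) = E[exp(i ⟪r, U⟫)]` of a random variable `U`. -/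
noncomputable def charFn {d : ℕ} {Ω : Type*} [MeasurableSpace Ω] (P : Measure Ω)
    (U : Ω → EuclideanSpace ℝ (Fin d)) (r : EuclideanSpace ℝ (Fin d)) : ℂ :=
  ∫ ω, Complex.exp (Complex.I * (⟪r, U ω⟫ : ℝ)) ∂P

/-! Writing `Θ(u) = ∫ (1 - Re e^{i⟪u, r⟫}) ρ(dr)` and using Tonelli (`ρ` is σ-finite because
`1 ∧ |r|²` is integrable and positive off the origin), independence of `X` and `Y` gives
`E Θ(X - Y) = ∫ (1 - Re (f_X · conj f_Y)) dρ`. Pointwise,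
`|f_U - f_V|² + (1 - |f_U|²) + (1 - |f_V|²) = 2 (1 - Re (f_U · conj f_V))` with all terms
nonnegative since `|f| ≤ 1`, so integrating against `ρ` gives the identity, and everything is
finite as soon as the cross term is; that one is controlled by `Θ(u - v) ≤ 2Θ(u) + 2Θ(v)`. -/

open scoped ComplexConjugate

theorem sigmaFinite_of_lintegral_ne_top {α : Type*} [MeasurableSpace α] {μ : Measure α}
    {f : α → ℝ≥0∞} (hf : AEMeasurable f μ) (hf_ne_zero : ∀ᵐ x ∂μ, f x ≠ 0)
    (hf_int : ∫⁻ x, f x ∂μ ≠ ∞) : SigmaFinite μ := by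
  have : IsFiniteMeasure (μ.withDensity f) := isFiniteMeasure_withDensity hf_int
  have : SigmaFinite ((μ.withDensity f).withDensity fun x ↦ (f x)⁻¹) :=
    SigmaFinite.withDensity_of_ne_top <| (withDensity_absolutelyContinuous μ f).ae_le <|
      hf_ne_zero.mono fun _ hx ↦ ENNReal.inv_ne_top.2 hx
  rwa [withDensity_inv_same₀ hf hf_ne_zero ((ae_lt_top' hf hf_int).mono fun _ hx ↦ hx.ne)] at this

theorem IsLevyMeasure.sigmaFinite {d : ℕ} {ρ : Measure (EuclideanSpace ℝ (Fin d))}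
    (hρ : IsLevyMeasure ρ) : SigmaFinite ρ := by
  refine sigmaFinite_of_lintegral_ne_top (by fun_prop) ?_ hρ.2.ne
  filter_upwards [measure_eq_zero_iff_ae_notMem.1 hρ.1] with r hr
  have : 0 < ‖r‖ := norm_pos_iff.2 hr
  positivity

theorem Real.one_sub_cos_sub_le (x y : ℝ) :
    1 - Real.cos (x - y) ≤ 2 * (1 - Real.cos x) + 2 * (1 - Real.cos y) := by
  nlinarith [Real.cos_sub x y, Real.sin_sq_add_cos_sq x, Real.sin_sq_add_cos_sq y,
    sq_nonneg (Real.sin x + Real.sin y), sq_nonneg (Real.cos x + Real.cos y - 2)]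

theorem Complex.sq_norm_sub_add_one_sub_re_mul_conj (a b : ℂ) :
    ‖a - b‖ ^ 2 + (1 - (a * conj a).re) + (1 - (b * conj b).re) = 2 * (1 - (a * conj b).re) := by
  simp only [Complex.sq_norm, Complex.normSq_apply, Complex.mul_re, Complex.conj_re,
    Complex.conj_im, Complex.sub_re, Complex.sub_im]
  ring

theorem lintegral_nnnorm_sub_sq_add_lintegral_one_sub_re_mul_conj {α : Type*}
    [MeasurableSpace α] {μ : Measure α} {f g : α → ℂ} (hf : AEMeasurable f μ)
    (hg : AEMeasurable g μ) (hf_le : ∀ x, ‖f x‖ ≤ 1) (hg_le : ∀ x, ‖g x‖ ≤ 1) :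
    ∫⁻ x, (‖f x - g x‖₊ : ℝ≥0∞) ^ 2 ∂μ + ∫⁻ x, ENNReal.ofReal (1 - (f x * conj (f x)).re) ∂μ
        + ∫⁻ x, ENNReal.ofReal (1 - (g x * conj (g x)).re) ∂μ
      = 2 * ∫⁻ x, ENNReal.ofReal (1 - (f x * conj (g x)).re) ∂μ := by
  rw [← lintegral_add_left' (by fun_prop), ← lintegral_add_left' (by fun_prop),
    ← lintegral_const_mul' _ _ ENNReal.ofNat_ne_top]
  refine lintegral_congr fun x ↦ ?_
  have one_sub_re_nonneg (z : ℂ) (hz : ‖z‖ ≤ 1) : 0 ≤ 1 - (z * conj z).re := by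
    rw [Complex.mul_conj, ← Complex.sq_norm]
    norm_cast
    nlinarith [norm_nonneg z]
  rw [← enorm_eq_nnnorm, ← ofReal_norm, ← ENNReal.ofReal_pow (norm_nonneg _),
    ← ENNReal.ofReal_add (sq_nonneg _) (one_sub_re_nonneg _ (hf_le x)),
    ← ENNReal.ofReal_add (add_nonneg (sq_nonneg _) (one_sub_re_nonneg _ (hf_le x)))
      (one_sub_re_nonneg _ (hg_le x)),
    Complex.sq_norm_sub_add_one_sub_re_mul_conj, ENNReal.ofReal_mul zero_le_two,
    ENNReal.ofReal_ofNat]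

theorem ENNReal.lt_top_and_toReal_eq_of_add_add_eq {a b c x : ℝ≥0∞} (h : a + b + c = 2 * x)
    (hx : x ≠ ∞) : a < ∞ ∧ a.toReal = 2 * x.toReal - b.toReal - c.toReal := by
  have hsum : a + b + c ≠ ∞ := h ▸ mul_ne_top ofNat_ne_top hx
  have ha : a ≠ ∞ := fun ha ↦ hsum (by simp [ha])
  have hb : b ≠ ∞ := fun hb ↦ hsum (by simp [hb])
  have hc : c ≠ ∞ := fun hc ↦ hsum (by simp [hc])
  refine ⟨ha.lt_top, ?_⟩
  have := congrArg ENNReal.toReal h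
  rw [toReal_add (add_ne_top.2 ⟨ha, hb⟩) hc, toReal_add ha hb, toReal_mul] at this
  simp only [toReal_ofNat] at this
  linarith

section CharFun

variable {E : Type*} [NormedAddCommGroup E] [InnerProductSpace ℝ E] [MeasurableSpace E]
  [BorelSpace E] [SecondCountableTopology E] {Ω : Type*} [MeasurableSpace Ω] {P : Measure Ω}

theorem re_charFun_eq_integral_cos (μ : Measure E) [IsFiniteMeasure μ] (t : E) :
    (charFun μ t).re = ∫ x, Real.cos ⟪x, t⟫ ∂μ := by
  rw [charFun_apply, ← RCLike.re_to_complex, ← integral_re]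
  · simp [Complex.exp_ofReal_mul_I_re]
  · exact Integrable.of_bound (by fun_prop) 1
      (ae_of_all _ fun _ ↦ (Complex.norm_exp_ofReal_mul_I _).le)

theorem charFun_map_neg (μ : Measure E) (t : E) :
    charFun (μ.map Neg.neg) t = conj (charFun μ t) := by
  rw [← charFun_neg, charFun_apply, charFun_apply, integral_map (by fun_prop) (by fun_prop)]
  simp [inner_neg_left, inner_neg_right]

theorem ProbabilityTheory.IndepFun.charFun_map_sub_eq_mul_conj [IsFiniteMeasure P]
    {X Y : Ω → E} (hX : AEMeasurable X P) (hY : AEMeasurable Y P) (hXY : IndepFun X Y P)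
    (t : E) :
    charFun (P.map (X - Y)) t = charFun (P.map X) t * conj (charFun (P.map Y) t) := by
  have hXY' : IndepFun X (-Y) P := hXY.comp measurable_id measurable_neg
  rw [sub_eq_add_neg, hXY'.charFun_map_add_eq_mul hX hY.neg, Pi.mul_apply,
    ← charFun_map_neg, AEMeasurable.map_map_of_aemeasurable (by fun_prop) hY]
  rfl

end CharFun

section LevyCndf

variable {d : ℕ} {ρ : Measure (EuclideanSpace ℝ (Fin d))} {Ω : Type*} [MeasurableSpace Ω]
  {P : Measure Ω}

theorem measurable_levyCndf [SFinite ρ] : Measurable (levyCndf ρ) :=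
  Measurable.lintegral_prod_right'
    (f := fun q : EuclideanSpace ℝ (Fin d) × EuclideanSpace ℝ (Fin d) ↦
      ENNReal.ofReal (1 - Real.cos ⟪q.1, q.2⟫)) (by fun_prop)

theorem levyCndf_sub_le (u v : EuclideanSpace ℝ (Fin d)) :
    levyCndf ρ (u - v) ≤ 2 * levyCndf ρ u + 2 * levyCndf ρ v := by
  simp only [levyCndf]
  rw [← lintegral_const_mul _ (by fun_prop), ← lintegral_const_mul _ (by fun_prop),
    ← lintegral_add_left (by fun_prop)]
  refine lintegral_mono fun r ↦ ?_
  have h₁ : 0 ≤ 1 - Real.cos ⟪u, r⟫ := sub_nonneg.2 (Real.cos_le_one _)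
  have h₂ : 0 ≤ 1 - Real.cos ⟪v, r⟫ := sub_nonneg.2 (Real.cos_le_one _)
  calc ENNReal.ofReal (1 - Real.cos ⟪u - v, r⟫)
      ≤ ENNReal.ofReal (2 * (1 - Real.cos ⟪u, r⟫) + 2 * (1 - Real.cos ⟪v, r⟫)) := by
        rw [inner_sub_left]
        exact ENNReal.ofReal_le_ofReal (Real.one_sub_cos_sub_le _ _)
    _ = _ := by
        rw [ENNReal.ofReal_add (by positivity) (by positivity), ENNReal.ofReal_mul zero_le_two,
          ENNReal.ofReal_mul zero_le_two, ENNReal.ofReal_ofNat]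

theorem lintegral_levyCndf_eq [SFinite ρ] (ν : Measure (EuclideanSpace ℝ (Fin d)))
    [IsProbabilityMeasure ν] :
    ∫⁻ u, levyCndf ρ u ∂ν = ∫⁻ r, ENNReal.ofReal (1 - (charFun ν r).re) ∂ρ := by
  simp only [levyCndf]
  rw [lintegral_lintegral_swap (by fun_prop)]
  refine lintegral_congr fun r ↦ ?_
  have hcos : Integrable (fun u ↦ Real.cos ⟪u, r⟫) ν :=
    Integrable.of_bound (by fun_prop) 1 (ae_of_all _ fun _ ↦ Real.abs_cos_le_one _)
  have hcos' : Integrable (fun u ↦ 1 - Real.cos ⟪u, r⟫) ν := (integrable_const 1).sub hcos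
  rw [← ofReal_integral_eq_lintegral_ofReal hcos'
    (ae_of_all _ fun _ ↦ sub_nonneg.2 (Real.cos_le_one _)),
    integral_sub (integrable_const 1) hcos, re_charFun_eq_integral_cos]
  simp

theorem charFn_eq_charFun_map {U : Ω → EuclideanSpace ℝ (Fin d)} (hU : AEMeasurable U P) :
    charFn P U = charFun (P.map U) := by
  ext r
  rw [charFn, charFun_apply, integral_map hU (by fun_prop)]
  simp_rw [mul_comm Complex.I, real_inner_comm]

theorem lintegral_levyCndf_sub_lt_top [SFinite ρ] {X Y : Ω → EuclideanSpace ℝ (Fin d)}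
    (hX : AEMeasurable X P) (hXf : ∫⁻ ω, levyCndf ρ (X ω) ∂P < ∞)
    (hYf : ∫⁻ ω, levyCndf ρ (Y ω) ∂P < ∞) :
    ∫⁻ ω, levyCndf ρ (X ω - Y ω) ∂P < ∞ := by
  have hΘ := measurable_levyCndf (ρ := ρ)
  calc ∫⁻ ω, levyCndf ρ (X ω - Y ω) ∂P
      ≤ ∫⁻ ω, (2 * levyCndf ρ (X ω) + 2 * levyCndf ρ (Y ω)) ∂P :=
        lintegral_mono fun ω ↦ levyCndf_sub_le _ _
    _ = 2 * ∫⁻ ω, levyCndf ρ (X ω) ∂P + 2 * ∫⁻ ω, levyCndf ρ (Y ω) ∂P := by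
        rw [lintegral_add_left' (by fun_prop),
          lintegral_const_mul' _ _ ENNReal.ofNat_ne_top,
          lintegral_const_mul' _ _ ENNReal.ofNat_ne_top]
    _ < ∞ := by finiteness

theorem ProbabilityTheory.IndepFun.lintegral_levyCndf_sub [SFinite ρ] [IsProbabilityMeasure P]
    {X Y : Ω → EuclideanSpace ℝ (Fin d)} (hX : AEMeasurable X P) (hY : AEMeasurable Y P)
    (hXY : IndepFun X Y P) :
    ∫⁻ ω, levyCndf ρ (X ω - Y ω) ∂P =
      ∫⁻ r, ENNReal.ofReal (1 - (charFun (P.map X) r * conj (charFun (P.map Y) r)).re) ∂ρ := by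
  have : IsProbabilityMeasure (P.map (X - Y)) := Measure.isProbabilityMeasure_map (hX.sub hY)
  change ∫⁻ ω, levyCndf ρ ((X - Y) ω) ∂P = _
  rw [← lintegral_map' measurable_levyCndf.aemeasurable (hX.sub hY), lintegral_levyCndf_eq]
  simp_rw [hXY.charFun_map_sub_eq_mul_conj hX hY]

theorem ProbabilityTheory.IndepFun.lintegral_levyCndf_sub_of_identDistrib [SFinite ρ]
    [IsProbabilityMeasure P] {X Y Z : Ω → EuclideanSpace ℝ (Fin d)} (hX : AEMeasurable X P)
    (hYZ : IdentDistrib Y Z P P) (hXZ : IndepFun X Z P)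
    (hXf : ∫⁻ ω, levyCndf ρ (X ω) ∂P < ∞) (hYf : ∫⁻ ω, levyCndf ρ (Y ω) ∂P < ∞) :
    ∫⁻ ω, levyCndf ρ (X ω - Z ω) ∂P < ∞ ∧
      ∫⁻ ω, levyCndf ρ (X ω - Z ω) ∂P =
        ∫⁻ r, ENNReal.ofReal (1 - (charFun (P.map X) r * conj (charFun (P.map Y) r)).re) ∂ρ := by
  have hZf : ∫⁻ ω, levyCndf ρ (Z ω) ∂P < ∞ :=
    (hYZ.comp (measurable_levyCndf (ρ := ρ))).lintegral_eq ▸ hYf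
  refine ⟨lintegral_levyCndf_sub_lt_top hX hXf hZf, ?_⟩
  rw [hXZ.lintegral_levyCndf_sub hX hYZ.aemeasurable_snd, hYZ.map_eq]

end LevyCndf

theorem dRho_sq_eq_levyCndf_expectations_general {d : ℕ}
    (ρ : Measure (EuclideanSpace ℝ (Fin d)))
    (hLevy : IsLevyMeasure ρ)
    {Ω : Type*} [MeasurableSpace Ω] (P : Measure Ω) [IsProbabilityMeasure P]
    (U V U' V' : Ω → EuclideanSpace ℝ (Fin d))
    (hmom : (∫⁻ ω, levyCndf ρ (U ω) ∂P) + (∫⁻ ω, levyCndf ρ (V ω) ∂P) < ∞)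
    (hid : IdentDistrib (fun ω => (U ω, V ω)) (fun ω => (U' ω, V' ω)) P P)
    (hindep : IndepFun (fun ω => (U ω, V ω)) (fun ω => (U' ω, V' ω)) P) :
    (∫⁻ r, (‖charFn P U r - charFn P V r‖₊ : ℝ≥0∞) ^ 2 ∂ρ) < ∞ ∧
      (∫⁻ ω, levyCndf ρ (U ω - V' ω) ∂P) < ∞ ∧
      (∫⁻ ω, levyCndf ρ (U ω - U' ω) ∂P) < ∞ ∧
      (∫⁻ ω, levyCndf ρ (V ω - V' ω) ∂P) < ∞ ∧
      (∫⁻ r, (‖charFn P U r - charFn P V r‖₊ : ℝ≥0∞) ^ 2 ∂ρ).toReal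
        = 2 * (∫⁻ ω, levyCndf ρ (U ω - V' ω) ∂P).toReal
          - (∫⁻ ω, levyCndf ρ (U ω - U' ω) ∂P).toReal
          - (∫⁻ ω, levyCndf ρ (V ω - V' ω) ∂P).toReal := by
  have := hLevy.sigmaFinite
  have hidU : IdentDistrib U U' P P := hid.comp measurable_fst
  have hidV : IdentDistrib V V' P P := hid.comp measurable_snd
  have hU := hidU.aemeasurable_fst
  have hV := hidV.aemeasurable_fst
  obtain ⟨hΘU, hΘV⟩ := ENNReal.add_lt_top.1 hmom
  obtain ⟨hfinUV', hUV'⟩ := IndepFun.lintegral_levyCndf_sub_of_identDistrib hU hidV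
    (hindep.comp measurable_fst measurable_snd) hΘU hΘV
  obtain ⟨hfinUU', hUU'⟩ := IndepFun.lintegral_levyCndf_sub_of_identDistrib hU hidU
    (hindep.comp measurable_fst measurable_fst) hΘU hΘU
  obtain ⟨hfinVV', hVV'⟩ := IndepFun.lintegral_levyCndf_sub_of_identDistrib hV hidV
    (hindep.comp measurable_snd measurable_snd) hΘV hΘV
  have := Measure.isProbabilityMeasure_map hU
  have := Measure.isProbabilityMeasure_map hV
  obtain ⟨hfin, heq⟩ := ENNReal.lt_top_and_toReal_eq_of_add_add_eq
    (lintegral_nnnorm_sub_sq_add_lintegral_one_sub_re_mul_conj (μ := ρ)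
      measurable_charFun.aemeasurable measurable_charFun.aemeasurable
      norm_charFun_le_one norm_charFun_le_one) (hUV' ▸ hfinUV').ne
  rw [charFn_eq_charFun_map hU, charFn_eq_charFun_map hV]
  exact ⟨hfin, hfinUV', hfinUU', hfinVV', by rw [heq, hUV', hUU', hVV']⟩

/-- Let `ρ` be a symmetric Lévy measure with full support and `Θ` the associated cndf.
Let `U, V` satisfy `E[Θ(U)] + E[Θ(V)] < ∞` and let `(U', V')` be an independent copy of
`(U, V)`. Then `d_ρ²(law U, law V) = 2 E[Θ(U - V')] - E[Θ(U - U')] - E[Θ(V - V')]`,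
and all terms in this identity are finite. -/
theorem dRho_sq_eq_levyCndf_expectations {d : ℕ}
    (ρ : Measure (EuclideanSpace ℝ (Fin d)))
    (hLevy : IsLevyMeasure ρ) (hsym : IsSymmetricMeasure ρ)
    (hfull : HasFullSupportOffZero ρ)
    {Ω : Type*} [MeasurableSpace Ω] (P : Measure Ω) [IsProbabilityMeasure P]
    (U V U' V' : Ω → EuclideanSpace ℝ (Fin d))
    (hU : Measurable U) (hV : Measurable V) (hU' : Measurable U') (hV' : Measurable V')
    (hmom : (∫⁻ ω, levyCndf ρ (U ω) ∂P) + (∫⁻ ω, levyCndf ρ (V ω) ∂P) < ∞)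
    (hid : IdentDistrib (fun ω => (U ω, V ω)) (fun ω => (U' ω, V' ω)) P P)
    (hindep : IndepFun (fun ω => (U ω, V ω)) (fun ω => (U' ω, V' ω)) P) :
    (∫⁻ r, (‖charFn P U r - charFn P V r‖₊ : ℝ≥0∞) ^ 2 ∂ρ) < ∞ ∧
      (∫⁻ ω, levyCndf ρ (U ω - V' ω) ∂P) < ∞ ∧
      (∫⁻ ω, levyCndf ρ (U ω - U' ω) ∂P) < ∞ ∧
      (∫⁻ ω, levyCndf ρ (V ω - V' ω) ∂P) < ∞ ∧
      (∫⁻ r, (‖charFn P U r - charFn P V r‖₊ : ℝ≥0∞) ^ 2 ∂ρ).toReal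
        = 2 * (∫⁻ ω, levyCndf ρ (U ω - V' ω) ∂P).toReal
          - (∫⁻ ω, levyCndf ρ (U ω - U' ω) ∂P).toReal
          - (∫⁻ ω, levyCndf ρ (V ω - V' ω) ∂P).toReal :=
  dRho_sq_eq_levyCndf_expectations_general ρ hLevy P U V U' V' hmom hid hindep
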